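/- For a partition κ with s parts, the set B_κ of semistandard Young tableaux of shape κ with entries in {1,…,s}, equipped with the standard raising and lowering tableau crystal operators e_i, f_i (1 ≤ i ≤ s−1) and the weight map sending a tableau to (the class of) its content, is a connected crystal with a unique highest weight element, namely the tableau of shape κ and content κ. -/

import Mathlib

open scoped Classical

namespace PaperFormal

/-- A filling of the plane by natural-number entries (0-based letters);
cells outside the relevant shape carry the junk value `0`. -/
abbrev Filling := ℕ → ℕ → ℕ

/-- A shape: a finite set of cells `(row, column)`. -/
abbrev Shape := Finset (ℕ × ℕ)

noncomputable def width (D : Shape) : ℕ := D.sup (fun c => c.2) + 1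
noncomputable def height (D : Shape) : ℕ := D.sup (fun c => c.1) + 1

/-- `T` is a semistandard (column-strict) filling of the cell set `D`:
entries weakly increase along rows, strictly increase down columns, and
vanish outside `D`. -/
def SsytOn (D : Shape) (T : Filling) : Prop :=
  (∀ i j1 j2, j1 ≤ j2 → (i, j1) ∈ D → (i, j2) ∈ D → T i j1 ≤ T i j2) ∧
  (∀ i1 i2 j, i1 < i2 → (i1, j) ∈ D → (i2, j) ∈ D → T i1 j < T i2 j) ∧
  (∀ i j, (i, j) ∉ D → T i j = 0)

/-- All entries of `T` on `D` lie in the alphabet `{0, …, N-1}`. -/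
def EntriesLT (D : Shape) (N : ℕ) (T : Filling) : Prop := ∀ c ∈ D, T c.1 c.2 < N

/-- The number of occurrences of the letter `a` in `T` (the content of `T` at `a`). -/
noncomputable def content (D : Shape) (T : Filling) (a : ℕ) : ℕ :=
  (D.filter (fun c => T c.1 c.2 = a)).card

/-- The (column) reading word of `T`: columns left to right, each read
bottom to top. -/
noncomputable def readingWord (D : Shape) (T : Filling) : List ℕ :=
  (List.range (width D)).flatMap (fun j =>
    (List.range (height D)).reverse.filterMap (fun i =>
      if (i, j) ∈ D then some (T i j) else none))

/-- `w` is Yamanouchi with respect to the letters `a` and `a+1`: every suffix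
contains at least as many `a`'s as `(a+1)`'s. -/
def YamPair (w : List ℕ) (a : ℕ) : Prop :=
  ∀ k, (w.drop k).count (a + 1) ≤ (w.drop k).count a

/-- `w` is anti-Yamanouchi with respect to `a` and `a+1`: every suffix contains
at most as many `a`'s as `(a+1)`'s. -/
def AntiYamPair (w : List ℕ) (a : ℕ) : Prop :=
  ∀ k, (w.drop k).count a ≤ (w.drop k).count (a + 1)

/-- `h_{a,j}`: number of `(a+1)`'s in column `j` or to the right, minus the
number of `a`'s there (Kashiwara–Nakashima signature rule). -/
noncomputable def hval (D : Shape) (T : Filling) (a j : ℕ) : ℤ :=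
  ((D.filter (fun c => j ≤ c.2 ∧ T c.1 c.2 = a + 1)).card : ℤ) -
  ((D.filter (fun c => j ≤ c.2 ∧ T c.1 c.2 = a)).card : ℤ)

/-- `k_{a,j}`: number of `a`'s in column `j` or to the left, minus the number of
`(a+1)`'s there. -/
noncomputable def kval (D : Shape) (T : Filling) (a j : ℕ) : ℤ :=
  ((D.filter (fun c => c.2 ≤ j ∧ T c.1 c.2 = a)).card : ℤ) -
  ((D.filter (fun c => c.2 ≤ j ∧ T c.1 c.2 = a + 1)).card : ℤ)

/-- The raising crystal operator `e_a`: turn an `a+1` into an `a` in the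
rightmost column where `h_{a,·}` is maximal and positive, if any. -/
noncomputable def eOp (D : Shape) (a : ℕ) (T : Filling) : Option Filling :=
  let F := (Finset.range (width D)).filter (fun j =>
    0 < hval D T a j ∧ ∀ j' ∈ Finset.range (width D), hval D T a j' ≤ hval D T a j)
  if h : F.Nonempty then
    some (fun i j => if (i, j) ∈ D ∧ j = F.max' h ∧ T i j = a + 1 then a else T i j)
  else none

/-- The lowering crystal operator `f_a`: turn an `a` into an `a+1` in the
leftmost column where `k_{a,·}` is maximal and positive, if any. -/
noncomputable def fOp (D : Shape) (a : ℕ) (T : Filling) : Option Filling :=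
  let F := (Finset.range (width D)).filter (fun j =>
    0 < kval D T a j ∧ ∀ j' ∈ Finset.range (width D), kval D T a j' ≤ kval D T a j)
  if h : F.Nonempty then
    some (fun i j => if (i, j) ∈ D ∧ j = F.min' h ∧ T i j = a then a + 1 else T i j)
  else none

/-- Iterate an `Option`-valued operator. -/
noncomputable def opIter (op : Filling → Option Filling) : ℕ → Filling → Option Filling
  | 0, T => some T
  | (l + 1), T => (op T).bind (opIter op l)

/-- `ε_a(T)`: the maximal number of applications of `e_a` not vanishing. -/
noncomputable def epsNum (D : Shape) (a : ℕ) (T : Filling) : ℕ :=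
  sSup {l : ℕ | opIter (eOp D a) l T ≠ none}

/-- `φ_a(T)`: the maximal number of applications of `f_a` not vanishing. -/
noncomputable def phiNum (D : Shape) (a : ℕ) (T : Filling) : ℕ :=
  sSup {l : ℕ | opIter (fOp D a) l T ≠ none}

/-- Update a single entry of a filling. -/
def updF (T : Filling) (a b v : ℕ) : Filling :=
  fun i j => if i = a ∧ j = b then v else T i j

/-- `c` is an inside corner of the skew shape `λ/μ`: a cell of `μ` having
neither the cell below nor the cell to its right in `μ`. -/
def IsInsideCorner (mu : Shape) (c : ℕ × ℕ) : Prop :=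
  c ∈ mu ∧ (c.1 + 1, c.2) ∉ mu ∧ (c.1, c.2 + 1) ∉ mu

/-- The path of a jeu-de-taquin slide inside the diagram `lam`, with fuel. -/
noncomputable def slidePath (lam : Shape) : ℕ → Filling → ℕ × ℕ → Filling × (ℕ × ℕ)
  | 0, T, p => (T, p)
  | (fuel + 1), T, p =>
    if (p.1 + 1, p.2) ∈ lam ∧ ((p.1, p.2 + 1) ∉ lam ∨ T (p.1 + 1) p.2 ≤ T p.1 (p.2 + 1)) then
      slidePath lam fuel (updF T p.1 p.2 (T (p.1 + 1) p.2)) (p.1 + 1, p.2)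
    else if (p.1, p.2 + 1) ∈ lam then
      slidePath lam fuel (updF T p.1 p.2 (T p.1 (p.2 + 1))) (p.1, p.2 + 1)
    else (T, p)

/-- A jeu-de-taquin slide of `T` starting at the inside corner `C`; returns the
new filling (with the vacated final box zeroed out) together with the final
(removed) box. -/
noncomputable def jdtSlide (lam : Shape) (T : Filling) (C : ℕ × ℕ) : Filling × (ℕ × ℕ) :=
  let r := slidePath lam (lam.card + 1) T C
  (updF r.1 r.2.1 r.2.2 0, r.2)

/-- The last cell of the last nonempty row of `mu`; for a Young diagram `mu`
this is an outer corner of `mu`, hence an inside corner of any skew shape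
`lam/mu`. -/
noncomputable def pickCorner (mu : Shape) : ℕ × ℕ :=
  (mu.sup (fun c => c.1),
    mu.sup (fun c => if c.1 = mu.sup (fun c' => c'.1) then c.2 else 0))

/-- Rectification: repeatedly slide at a canonical inside corner until the
inner shape is exhausted; returns the final cell set and filling. -/
noncomputable def rectAux : ℕ → Shape → Shape → Filling → Shape × Filling
  | 0, lam, mu, T => (lam \ mu, T)
  | (fuel + 1), lam, mu, T =>
    if mu.Nonempty then
      rectAux fuel (lam.erase (jdtSlide lam T (pickCorner mu)).2) (mu.erase (pickCorner mu))
        (jdtSlide lam T (pickCorner mu)).1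
    else (lam \ mu, T)

/-- Jeu-de-taquin rectification of the skew tableau `T` of shape `lam/mu`. -/
noncomputable def rect (lam mu : Shape) (T : Filling) : Shape × Filling :=
  rectAux mu.card lam mu T

/-- Jeu-de-taquin demotion with alphabet `{0, …, s-1}`: delete the boxes with
entry `0`, decrement all other entries, rectify, and fill the vacated
horizontal strip with the entry `s - 1`. -/
noncomputable def demote (D : Shape) (s : ℕ) (T : Filling) : Filling :=
  let mu := D.filter (fun c => T c.1 c.2 = 0)
  let r := rect D mu (fun i j => if (i, j) ∈ D ∧ (i, j) ∉ mu then T i j - 1 else 0)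
  fun i j => if (i, j) ∈ D then (if (i, j) ∈ r.1 then r.2 i j else s - 1) else 0

/-- `pr` is jeu-de-taquin promotion on the semistandard tableaux of shape `D`
with entries `< s`: it is the (two-sided, by injectivity of demotion) inverse
of demotion on that set. -/
def IsPromotion (D : Shape) (s : ℕ) (pr : Filling → Filling) : Prop :=
  ∀ T, SsytOn D T → EntriesLT D s T →
    SsytOn D (pr T) ∧ EntriesLT D s (pr T) ∧ demote D s (pr T) = T

/-- Auxiliary recursion for the Schützenberger involution: repeatedly demote
(without refilling) and record the vacated skew strips, filling the strip
vacated at stage `u+1` with the entry `u`. -/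
noncomputable def evacAux : ℕ → Shape → Filling → Filling
  | 0, _, _ => fun _ _ => 0
  | (u + 1), D, T =>
    fun i j =>
      if (i, j) ∈ D ∧
          (i, j) ∉ (rect D (D.filter (fun c => T c.1 c.2 = 0))
            (fun i' j' => if (i', j') ∈ D ∧ (i', j') ∉ D.filter (fun c => T c.1 c.2 = 0)
              then T i' j' - 1 else 0)).1 then u
      else evacAux u
        (rect D (D.filter (fun c => T c.1 c.2 = 0))
          (fun i' j' => if (i', j') ∈ D ∧ (i', j') ∉ D.filter (fun c => T c.1 c.2 = 0)
            then T i' j' - 1 else 0)).1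
        (rect D (D.filter (fun c => T c.1 c.2 = 0))
          (fun i' j' => if (i', j') ∈ D ∧ (i', j') ∉ D.filter (fun c => T c.1 c.2 = 0)
            then T i' j' - 1 else 0)).2 i j

/-- The Schützenberger involution (evacuation) on semistandard tableaux of
shape `D` with entries in `{0, …, s-1}`. -/
noncomputable def evac (s : ℕ) (D : Shape) (T : Filling) : Filling := evacAux s D T

end PaperFormal

/-!
Write `hval j` for the number of `a + 1`s minus the number of `a`s in the columns `≥ j`; it
vanishes right of the shape. The signature rule says that `e_a` lowers the `a + 1` of the last
column where `hval` is maximal and `f_a` raises the `a` of the column just before the first one.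
By column strictness a column changes `hval` by `-1`, `0` or `1`, which pins these entries down;
the shape being a Young diagram then shows that the change keeps the tableau semistandard, and
the two operators undo each other. Under `e_a` the maximum of `hval` drops by one, so `ε_a` is
that maximum, and `φ_a` is the same maximum seen from the left, shifted by
`hval 0 = content (a + 1) - content a`. Finally, `e_a` lowers the sum of the entries, and only
the row-filled tableau is killed by every `e_a`, so raising always ends there.
-/

namespace PaperFormal

open Finset

section Ssyt

variable {D : Shape} {T : Filling}

lemma SsytOn.col_inj (hT : SsytOn D T) {i₁ i₂ j : ℕ} (h₁ : (i₁, j) ∈ D) (h₂ : (i₂, j) ∈ D)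
    (h : T i₁ j = T i₂ j) : i₁ = i₂ := by
  rcases lt_trichotomy i₁ i₂ with hlt | heq | hgt
  · exact absurd h (hT.2.1 _ _ _ hlt h₁ h₂).ne
  · exact heq
  · exact absurd h (hT.2.1 _ _ _ hgt h₂ h₁).ne'

lemma SsytOn.col_le (hT : SsytOn D T) {i₁ i₂ j : ℕ} (hi : i₁ ≤ i₂) (h₁ : (i₁, j) ∈ D)
    (h₂ : (i₂, j) ∈ D) : T i₁ j ≤ T i₂ j := by
  rcases hi.lt_or_eq with hlt | rfl
  · exact (hT.2.1 _ _ _ hlt h₁ h₂).le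
  · exact le_rfl

lemma SsytOn.updF_of_between (hT : SsytOn D T) {i j v : ℕ} (hij : (i, j) ∈ D)
    (hleft : ∀ j' < j, (i, j') ∈ D → T i j' ≤ v)
    (hright : ∀ j', j < j' → (i, j') ∈ D → v ≤ T i j')
    (habove : ∀ i' < i, (i', j) ∈ D → T i' j < v)
    (hbelow : ∀ i', i < i' → (i', j) ∈ D → v < T i' j) :
    SsytOn D (updF T i j v) := by
  refine ⟨fun r j₁ j₂ hle h₁ h₂ => ?_, fun r₁ r₂ c hlt h₁ h₂ => ?_, fun r c h => ?_⟩
  · simp only [PaperFormal.updF]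
    split_ifs with e₁ e₂ e₂
    · exact le_rfl
    · obtain ⟨rfl, rfl⟩ := e₁
      exact hright j₂ (lt_of_le_of_ne hle fun e => e₂ ⟨rfl, e.symm⟩) h₂
    · obtain ⟨rfl, rfl⟩ := e₂
      exact hleft j₁ (lt_of_le_of_ne hle fun e => e₁ ⟨rfl, e⟩) h₁
    · exact hT.1 r j₁ j₂ hle h₁ h₂
  · simp only [PaperFormal.updF]
    split_ifs with e₁ e₂ e₂
    · omega
    · obtain ⟨rfl, rfl⟩ := e₁
      exact hbelow r₂ hlt h₂
    · obtain ⟨rfl, rfl⟩ := e₂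
      exact habove r₁ hlt h₁
    · exact hT.2.1 r₁ r₂ c hlt h₁ h₂
  · have hne : ¬(r = i ∧ c = j) := by rintro ⟨rfl, rfl⟩; exact h hij
    simp only [PaperFormal.updF, if_neg hne]
    exact hT.2.2 r c h

end Ssyt

lemma EntriesLT.updF {D : Shape} {T : Filling} {N : ℕ} (hE : EntriesLT D N T) {i j v : ℕ}
    (hv : v < N) : EntriesLT D N (updF T i j v) := by
  intro c hc
  simp only [PaperFormal.updF]
  split_ifs
  exacts [hv, hE c hc]

lemma updF_apply_self (T : Filling) (i j v : ℕ) : updF T i j v i j = v := by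
  simp [PaperFormal.updF]

lemma updF_updF_apply_self (T : Filling) (i j v : ℕ) : updF (updF T i j v) i j (T i j) = T := by
  funext r c
  simp only [PaperFormal.updF]
  split_ifs with h
  · rw [h.1, h.2]
  · rfl

lemma sum_updF_add {M : Type*} [AddCommMonoid M] {D : Shape} {i j : ℕ} (hij : (i, j) ∈ D)
    (T : Filling) (v : ℕ) (g : ℕ × ℕ → ℕ → M) :
    (∑ c ∈ D, g c (updF T i j v c.1 c.2)) + g (i, j) (T i j) =
      (∑ c ∈ D, g c (T c.1 c.2)) + g (i, j) v := by
  have hrest : ∑ c ∈ D.erase (i, j), g c (updF T i j v c.1 c.2) =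
      ∑ c ∈ D.erase (i, j), g c (T c.1 c.2) := by
    refine sum_congr rfl fun c hc => ?_
    have hne : ¬(c.1 = i ∧ c.2 = j) := fun h => (ne_of_mem_erase hc) (Prod.ext h.1 h.2)
    simp only [PaperFormal.updF, if_neg hne]
  rw [← add_sum_erase D _ hij, ← add_sum_erase D _ hij, hrest, updF_apply_self]
  abel

section Counting

variable {D : Shape} {T : Filling} {a : ℕ}

noncomputable def colCount (D : Shape) (T : Filling) (v j : ℕ) : ℕ :=
  (D.filter (fun c => c.2 = j ∧ T c.1 c.2 = v)).card

lemma snd_lt_width {c : ℕ × ℕ} (hc : c ∈ D) : c.2 < width D :=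
  Nat.lt_succ_of_le (le_sup (f := fun c => c.2) hc)

lemma hval_succ (D : Shape) (T : Filling) (a j : ℕ) :
    hval D T a j = colCount D T (a + 1) j - colCount D T a j + hval D T a (j + 1) := by
  have split : ∀ v, (D.filter (fun c => j ≤ c.2 ∧ T c.1 c.2 = v)).card =
      colCount D T v j + (D.filter (fun c => j + 1 ≤ c.2 ∧ T c.1 c.2 = v)).card := by
    intro v
    simp only [colCount, card_filter, ← sum_add_distrib]
    exact sum_congr rfl fun c _ => by split_ifs <;> omega
  simp only [hval, split]
  push_cast
  ring

lemma hval_of_width_le {j : ℕ} (hj : width D ≤ j) : hval D T a j = 0 := by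
  have empty : ∀ v, D.filter (fun c => j ≤ c.2 ∧ T c.1 c.2 = v) = ∅ := fun v =>
    filter_eq_empty_iff.2 fun c hc h => absurd (snd_lt_width hc) (by omega)
  simp [hval, empty]

lemma hval_zero (D : Shape) (T : Filling) (a : ℕ) :
    hval D T a 0 = (content D T (a + 1) : ℤ) - content D T a := by
  simp [hval, content]

lemma kval_eq (D : Shape) (T : Filling) (a j : ℕ) :
    kval D T a j = hval D T a (j + 1) - hval D T a 0 := by
  have split : ∀ v, (D.filter (fun c => 0 ≤ c.2 ∧ T c.1 c.2 = v)).card =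
      (D.filter (fun c => c.2 ≤ j ∧ T c.1 c.2 = v)).card +
        (D.filter (fun c => j + 1 ≤ c.2 ∧ T c.1 c.2 = v)).card := by
    intro v
    simp only [card_filter, ← sum_add_distrib]
    exact sum_congr rfl fun c _ => by split_ifs <;> omega
  simp only [kval, hval, split]
  push_cast
  ring

lemma content_updF_add {i j : ℕ} (hij : (i, j) ∈ D) (T : Filling) (v b : ℕ) :
    content D (updF T i j v) b + (if T i j = b then 1 else 0) =
      content D T b + (if v = b then 1 else 0) := by
  simpa only [content, card_filter] using
    sum_updF_add hij T v (fun _ x => if x = b then 1 else 0)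

lemma hval_updF_add {i j : ℕ} (hij : (i, j) ∈ D) (T : Filling) (v a k : ℕ) :
    hval D (updF T i j v) a k +
        ((if k ≤ j ∧ T i j = a + 1 then 1 else 0) - (if k ≤ j ∧ T i j = a then 1 else 0)) =
      hval D T a k + ((if k ≤ j ∧ v = a + 1 then 1 else 0) - (if k ≤ j ∧ v = a then 1 else 0)) := by
  have := sum_updF_add hij T v (fun c x =>
    ((if k ≤ c.2 ∧ x = a + 1 then 1 else 0) - (if k ≤ c.2 ∧ x = a then 1 else 0) : ℤ))
  simpa only [hval, card_filter, Nat.cast_sum, Nat.cast_ite, Nat.cast_one, Nat.cast_zero,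
    sum_sub_distrib] using this

lemma hval_updF_of_eq_succ {i j : ℕ} (hij : (i, j) ∈ D) (hv : T i j = a + 1) (k : ℕ) :
    hval D (updF T i j a) a k = hval D T a k - if k ≤ j then 2 else 0 := by
  have := hval_updF_add hij T a a k
  by_cases hk : k ≤ j <;> simp [hk, hv] at this ⊢ <;> linarith

lemma hval_updF_of_eq {i j : ℕ} (hij : (i, j) ∈ D) (hv : T i j = a) (k : ℕ) :
    hval D (updF T i j (a + 1)) a k = hval D T a k + if k ≤ j then 2 else 0 := by
  have := hval_updF_add hij T (a + 1) a k
  by_cases hk : k ≤ j <;> simp [hk, hv] at this ⊢ <;> linarith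

end Counting

section Columns

variable {D : Shape} {T : Filling} {a j : ℕ}

lemma SsytOn.colCount_le_one (hT : SsytOn D T) (v j : ℕ) : colCount D T v j ≤ 1 := by
  refine card_le_one.2 fun c hc c' hc' => ?_
  simp only [mem_filter] at hc hc'
  obtain ⟨hcD, rfl, hcv⟩ := hc
  obtain ⟨hc'D, hcol, hc'v⟩ := hc'
  have hD : (c'.1, c.2) ∈ D := hcol ▸ hc'D
  exact Prod.ext (hT.col_inj hcD hD (by rw [hcv, ← hc'v, hcol])) hcol.symm

lemma one_le_colCount_iff {v : ℕ} : 1 ≤ colCount D T v j ↔ ∃ i, (i, j) ∈ D ∧ T i j = v := by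
  simp only [colCount, Nat.one_le_iff_ne_zero, ne_eq, card_eq_zero, ← nonempty_iff_ne_empty,
    filter_nonempty_iff]
  exact ⟨fun ⟨c, hc, hcol, hv⟩ => ⟨c.1, hcol ▸ hc, hcol ▸ hv⟩,
    fun ⟨i, hi, hv⟩ => ⟨(i, j), hi, rfl, hv⟩⟩

lemma colCount_eq_zero_iff {v : ℕ} : colCount D T v j = 0 ↔ ∀ i, (i, j) ∈ D → T i j ≠ v := by
  rw [← not_iff_not, ← ne_eq, ← Nat.one_le_iff_ne_zero, one_le_colCount_iff]
  push Not
  rfl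

lemma SsytOn.col_of_hval_succ_lt (hT : SsytOn D T) (h : hval D T a (j + 1) < hval D T a j) :
    (∃ i, (i, j) ∈ D ∧ T i j = a + 1) ∧ (∀ i, (i, j) ∈ D → T i j ≠ a) ∧
      hval D T a j = hval D T a (j + 1) + 1 := by
  have := hval_succ D T a j
  have h₁ := hT.colCount_le_one (a + 1) j
  have h₀ := hT.colCount_le_one a j
  exact ⟨one_le_colCount_iff.1 (by omega), colCount_eq_zero_iff.1 (by omega), by omega⟩

lemma SsytOn.col_of_hval_lt_succ (hT : SsytOn D T) (h : hval D T a j < hval D T a (j + 1)) :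
    (∃ i, (i, j) ∈ D ∧ T i j = a) ∧ (∀ i, (i, j) ∈ D → T i j ≠ a + 1) ∧
      hval D T a (j + 1) = hval D T a j + 1 := by
  have := hval_succ D T a j
  have h₁ := hT.colCount_le_one (a + 1) j
  have h₀ := hT.colCount_le_one a j
  exact ⟨one_le_colCount_iff.1 (by omega), colCount_eq_zero_iff.1 (by omega), by omega⟩

end Columns

structure IsLastArgmax (g : ℕ → ℤ) (j : ℕ) : Prop where
  le : ∀ k, g k ≤ g j
  lt : ∀ k, j < k → g k < g j

structure IsFirstArgmax (g : ℕ → ℤ) (j : ℕ) : Prop where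
  le : ∀ k, g k ≤ g j
  lt : ∀ k < j, g k < g j

lemma IsLastArgmax.unique {g : ℕ → ℤ} {j j' : ℕ} (h : IsLastArgmax g j)
    (h' : IsLastArgmax g j') : j = j' := by
  by_contra hne
  rcases Nat.lt_or_gt_of_ne hne with hlt | hlt
  · exact (h.lt j' hlt).not_ge (h'.le j)
  · exact (h'.lt j hlt).not_ge (h.le j')

lemma IsFirstArgmax.unique {g : ℕ → ℤ} {j j' : ℕ} (h : IsFirstArgmax g j)
    (h' : IsFirstArgmax g j') : j = j' := by
  by_contra hne
  rcases Nat.lt_or_gt_of_ne hne with hlt | hlt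
  · exact (h'.lt j hlt).not_ge (h.le j')
  · exact (h.lt j' hlt).not_ge (h'.le j)

def posMaxCols (w : ℕ) (g : ℕ → ℤ) : Finset ℕ :=
  (range w).filter (fun j => 0 < g j ∧ ∀ j' ∈ range w, g j' ≤ g j)

lemma mem_posMaxCols {w j : ℕ} {g : ℕ → ℤ} :
    j ∈ posMaxCols w g ↔ j < w ∧ 0 < g j ∧ ∀ j' < w, g j' ≤ g j := by
  simp [posMaxCols]

lemma posMaxCols_nonempty_iff {w : ℕ} {g : ℕ → ℤ} (hw : (range w).Nonempty) :
    (posMaxCols w g).Nonempty ↔ 0 < (range w).sup' hw g := by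
  constructor
  · rintro ⟨j, hj⟩
    obtain ⟨hjw, hpos, -⟩ := mem_posMaxCols.1 hj
    exact hpos.trans_le (le_sup' g (mem_range.2 hjw))
  · intro hpos
    obtain ⟨j, hj, hmax⟩ := exists_mem_eq_sup' hw g
    exact ⟨j, mem_posMaxCols.2 ⟨mem_range.1 hj, hmax ▸ hpos,
      fun j' hj' => hmax ▸ le_sup' g (mem_range.2 hj')⟩⟩

def colReplace (D : Shape) (T : Filling) (j u v : ℕ) : Filling :=
  fun i' j' => if (i', j') ∈ D ∧ j' = j ∧ T i' j' = u then v else T i' j'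

lemma eOp_eq_dite (D : Shape) (a : ℕ) (T : Filling) :
    eOp D a T = if h : (posMaxCols (width D) (hval D T a)).Nonempty then
      some (colReplace D T ((posMaxCols (width D) (hval D T a)).max' h) (a + 1) a) else none :=
  rfl

lemma fOp_eq_dite (D : Shape) (a : ℕ) (T : Filling) :
    fOp D a T = if h : (posMaxCols (width D) (kval D T a)).Nonempty then
      some (colReplace D T ((posMaxCols (width D) (kval D T a)).min' h) a (a + 1)) else none :=
  rfl

section Argmax

variable {D : Shape} {T : Filling} {a j : ℕ}

lemma SsytOn.colReplace_eq_updF (hT : SsytOn D T) {i u v : ℕ} (hij : (i, j) ∈ D)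
    (hu : T i j = u) : colReplace D T j u v = updF T i j v := by
  funext r c
  simp only [colReplace, PaperFormal.updF]
  by_cases h : r = i ∧ c = j
  · obtain ⟨rfl, rfl⟩ := h
    simp [hij, hu]
  · rw [if_neg h, if_neg]
    rintro ⟨hrc, rfl, hv⟩
    exact h ⟨hT.col_inj hrc hij (hv.trans hu.symm), rfl⟩

lemma isLastArgmax_max' (h : (posMaxCols (width D) (hval D T a)).Nonempty) :
    IsLastArgmax (hval D T a) ((posMaxCols (width D) (hval D T a)).max' h) := by
  obtain ⟨hw, hpos, hmax⟩ := mem_posMaxCols.1 (max'_mem _ h)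
  set j₀ := (posMaxCols (width D) (hval D T a)).max' h
  have le : ∀ k, hval D T a k ≤ hval D T a j₀ := fun k => by
    rcases lt_or_ge k (width D) with hk | hk
    · exact hmax k hk
    · exact (hval_of_width_le hk).trans_le hpos.le
  refine ⟨le, fun k hk => (le k).lt_of_ne fun heq => ?_⟩
  rcases lt_or_ge k (width D) with hkw | hkw
  · have : k ∈ posMaxCols (width D) (hval D T a) :=
      mem_posMaxCols.2 ⟨hkw, heq ▸ hpos, fun j' hj' => heq ▸ hmax j' hj'⟩
    exact (le_max' _ k this).not_gt hk
  · exact hpos.ne' (heq ▸ hval_of_width_le hkw)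

lemma IsLastArgmax.mem_posMaxCols (h : IsLastArgmax (hval D T a) j) (hj : j < width D) :
    j ∈ posMaxCols (width D) (hval D T a) :=
  PaperFormal.mem_posMaxCols.2 ⟨hj, hval_of_width_le (le_refl (width D)) ▸ h.lt _ hj,
    fun k _ => h.le k⟩

lemma isFirstArgmax_min' (h : (posMaxCols (width D) (kval D T a)).Nonempty) :
    IsFirstArgmax (hval D T a) ((posMaxCols (width D) (kval D T a)).min' h + 1) := by
  obtain ⟨hw, hpos, hmax⟩ := mem_posMaxCols.1 (min'_mem _ h)
  set j₀ := (posMaxCols (width D) (kval D T a)).min' h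
  simp only [kval_eq] at hpos hmax
  have hlast := hmax (width D - 1) (by omega)
  rw [Nat.sub_add_cancel (by omega), hval_of_width_le le_rfl] at hlast
  refine ⟨fun k => ?_, fun k hk => ?_⟩
  · rcases k with _ | k
    · omega
    rcases lt_or_ge k (width D) with hkw | hkw
    · linarith [hmax k hkw]
    · rw [hval_of_width_le (by omega)]
      omega
  · rcases k with _ | k
    · omega
    refine (lt_of_le_of_ne (by linarith [hmax k (by omega)]) fun heq => ?_)
    have : k ∈ posMaxCols (width D) (kval D T a) := by
      refine mem_posMaxCols.2 ⟨by omega, ?_, fun j' hj' => ?_⟩ <;> simp only [kval_eq]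
      · omega
      · linarith [hmax j' hj']
    exact (min'_le _ k this).not_gt (by omega)

lemma IsFirstArgmax.mem_posMaxCols (h : IsFirstArgmax (hval D T a) (j + 1)) (hj : j < width D) :
    j ∈ posMaxCols (width D) (kval D T a) := by
  refine PaperFormal.mem_posMaxCols.2 ⟨hj, ?_, fun k _ => ?_⟩ <;> simp only [kval_eq]
  · linarith [h.lt 0 (Nat.succ_pos j)]
  · linarith [h.le (k + 1)]

lemma eOp_eq_some_iff (hT : SsytOn D T) {T' : Filling} :
    eOp D a T = some T' ↔ ∃ i j, (i, j) ∈ D ∧ T i j = a + 1 ∧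
      IsLastArgmax (hval D T a) j ∧ updF T i j a = T' := by
  rw [eOp_eq_dite]
  constructor
  · intro h
    split_ifs at h with hne
    have hlast := isLastArgmax_max' hne
    have hdrop := hlast.lt _ (Nat.lt_succ_self _)
    obtain ⟨⟨i, hij, hv⟩, -⟩ := hT.col_of_hval_succ_lt hdrop
    exact ⟨i, _, hij, hv, hlast, by rw [← hT.colReplace_eq_updF hij hv]; exact Option.some_inj.1 h⟩
  · rintro ⟨i, j, hij, hv, hlast, rfl⟩
    have hmem := hlast.mem_posMaxCols (snd_lt_width hij)
    rw [dif_pos ⟨j, hmem⟩, (isLastArgmax_max' ⟨j, hmem⟩).unique hlast,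
      hT.colReplace_eq_updF hij hv]

lemma fOp_eq_some_iff (hT : SsytOn D T) {T' : Filling} :
    fOp D a T = some T' ↔ ∃ i j, (i, j) ∈ D ∧ T i j = a ∧
      IsFirstArgmax (hval D T a) (j + 1) ∧ updF T i j (a + 1) = T' := by
  rw [fOp_eq_dite]
  constructor
  · intro h
    split_ifs at h with hne
    have hfirst := isFirstArgmax_min' hne
    have hrise := hfirst.lt _ (Nat.lt_succ_self _)
    obtain ⟨⟨i, hij, hv⟩, -⟩ := hT.col_of_hval_lt_succ hrise
    exact ⟨i, _, hij, hv, hfirst, by rw [← hT.colReplace_eq_updF hij hv]; exact Option.some_inj.1 h⟩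
  · rintro ⟨i, j, hij, hv, hfirst, rfl⟩
    have hmem := hfirst.mem_posMaxCols (snd_lt_width hij)
    rw [dif_pos ⟨j, hmem⟩, Nat.succ_injective ((isFirstArgmax_min' ⟨j, hmem⟩).unique hfirst),
      hT.colReplace_eq_updF hij hv]

end Argmax

section Young

variable {κ : YoungDiagram} {T T' : Filling} {a i j : ℕ}

/-- Two equal entries `a + 1` side by side: the `a` that could match the left one would sit above
the right one, in its column. -/
lemma SsytOn.hval_eq_of_succ_pair (hT : SsytOn κ.cells T) (hij : (i, j + 1) ∈ κ.cells)
    (h₁ : T i j = a + 1) (h₂ : T i (j + 1) = a + 1)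
    (hno : ∀ i', (i', j + 1) ∈ κ.cells → T i' (j + 1) ≠ a) :
    hval κ.cells T a j = hval κ.cells T a (j + 1) + 1 := by
  have hij' : (i, j) ∈ κ.cells := κ.up_left_mem le_rfl j.le_succ hij
  have hc₁ : 1 ≤ colCount κ.cells T (a + 1) j := one_le_colCount_iff.2 ⟨i, hij', h₁⟩
  have hc₀ : colCount κ.cells T a j = 0 := colCount_eq_zero_iff.2 fun i' hi' hv => by
    have hlt : i' < i := by
      by_contra hge
      have := hT.col_le (not_lt.1 hge) hij' hi'
      omega
    have hD : (i', j + 1) ∈ κ.cells := κ.up_left_mem hlt.le le_rfl hij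
    have := hT.1 i' j (j + 1) j.le_succ hi' hD
    have := hT.2.1 i' i (j + 1) hlt hD hij
    exact hno i' hD (by omega)
  have := hval_succ κ.cells T a j
  have := hT.colCount_le_one (a + 1) j
  omega

/-- Two equal entries `a` side by side: the `a + 1` that could match the right one would sit
below the left one, in its column. -/
lemma SsytOn.hval_eq_of_pair (hT : SsytOn κ.cells T) (hij : (i, j + 1) ∈ κ.cells)
    (h₁ : T i j = a) (h₂ : T i (j + 1) = a)
    (hno : ∀ i', (i', j) ∈ κ.cells → T i' j ≠ a + 1) :
    hval κ.cells T a (j + 1 + 1) = hval κ.cells T a (j + 1) + 1 := by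
  have hij' : (i, j) ∈ κ.cells := κ.up_left_mem le_rfl j.le_succ hij
  have hc₀ : 1 ≤ colCount κ.cells T a (j + 1) := one_le_colCount_iff.2 ⟨i, hij, h₂⟩
  have hc₁ : colCount κ.cells T (a + 1) (j + 1) = 0 := colCount_eq_zero_iff.2 fun i' hi' hv => by
    have hlt : i < i' := by
      by_contra hle
      have := hT.col_le (not_lt.1 hle) hi' hij
      omega
    have hD : (i', j) ∈ κ.cells := κ.up_left_mem le_rfl j.le_succ hi'
    have := hT.1 i' j (j + 1) j.le_succ hD hi'
    have := hT.2.1 i i' j hlt hij' hD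
    exact hno i' hD (by omega)
  have := hval_succ κ.cells T a (j + 1)
  have := hT.colCount_le_one a (j + 1)
  omega

lemma SsytOn.of_eOp_eq_some (hT : SsytOn κ.cells T) (h : eOp κ.cells a T = some T') :
    SsytOn κ.cells T' := by
  obtain ⟨i, j, hij, hv, hlast, rfl⟩ := (eOp_eq_some_iff hT).1 h
  obtain ⟨-, hno, -⟩ := hT.col_of_hval_succ_lt (hlast.lt _ j.lt_succ_self)
  refine hT.updF_of_between hij (fun j' hj' hD => ?_) (fun j' hj' hD => ?_)
    (fun i' hi' hD => ?_) (fun i' hi' hD => ?_)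
  · obtain ⟨j₁, rfl⟩ : ∃ j₁, j = j₁ + 1 := ⟨j - 1, by omega⟩
    have hD₁ : (i, j₁) ∈ κ.cells := κ.up_left_mem le_rfl j₁.le_succ hij
    have hne : T i j₁ ≠ a + 1 := fun h₁ => by
      have := hT.hval_eq_of_succ_pair hij h₁ hv hno
      have := hlast.le j₁
      omega
    have := hT.1 i j' j₁ (by omega) hD hD₁
    have := hT.1 i j₁ (j₁ + 1) j₁.le_succ hD₁ hij
    omega
  · have := hT.1 i j j' hj'.le hij hD
    omega
  · have := hT.2.1 i' i j hi' hD hij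
    have := hno i' hD
    omega
  · have := hT.2.1 i i' j hi' hij hD
    omega

lemma SsytOn.of_fOp_eq_some (hT : SsytOn κ.cells T) (h : fOp κ.cells a T = some T') :
    SsytOn κ.cells T' := by
  obtain ⟨i, j, hij, hv, hfirst, rfl⟩ := (fOp_eq_some_iff hT).1 h
  obtain ⟨-, hno, -⟩ := hT.col_of_hval_lt_succ (hfirst.lt _ j.lt_succ_self)
  refine hT.updF_of_between hij (fun j' hj' hD => ?_) (fun j' hj' hD => ?_)
    (fun i' hi' hD => ?_) (fun i' hi' hD => ?_)
  · have := hT.1 i j' j hj'.le hD hij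
    omega
  · have hD₁ : (i, j + 1) ∈ κ.cells := κ.up_left_mem le_rfl hj' hD
    have hne : T i (j + 1) ≠ a := fun h₁ => by
      have := hT.hval_eq_of_pair hD₁ hv h₁ hno
      have := hfirst.le (j + 1 + 1)
      omega
    have := hT.1 i (j + 1) j' hj' hD₁ hD
    have := hT.1 i j (j + 1) j.le_succ hij hD₁
    omega
  · have := hT.2.1 i' i j hi' hD hij
    omega
  · have := hT.2.1 i i' j hi' hij hD
    have := hno i' hD
    omega

end Young

section Entries

variable {D : Shape} {T T' : Filling} {a s : ℕ}

lemma EntriesLT.of_eOp_eq_some (hT : SsytOn D T) (hE : EntriesLT D s T)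
    (h : eOp D a T = some T') : EntriesLT D s T' := by
  obtain ⟨i, j, hij, hv, -, rfl⟩ := (eOp_eq_some_iff hT).1 h
  have := hE _ hij
  exact hE.updF (by simp only at this; omega)

lemma EntriesLT.of_fOp_eq_some (hT : SsytOn D T) (hE : EntriesLT D s T) (ha : a + 1 < s)
    (h : fOp D a T = some T') : EntriesLT D s T' := by
  obtain ⟨i, j, hij, -, -, rfl⟩ := (fOp_eq_some_iff hT).1 h
  exact hE.updF ha

end Entries

section Inverse

variable {κ : YoungDiagram} {T T' : Filling} {a : ℕ}

lemma fOp_eq_some_of_eOp_eq_some (hT : SsytOn κ.cells T) (h : eOp κ.cells a T = some T') :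
    fOp κ.cells a T' = some T := by
  have hT' := hT.of_eOp_eq_some h
  obtain ⟨i, j, hij, hv, hlast, rfl⟩ := (eOp_eq_some_iff hT).1 h
  obtain ⟨-, -, hdrop⟩ := hT.col_of_hval_succ_lt (hlast.lt _ j.lt_succ_self)
  have upd := hval_updF_of_eq_succ hij hv
  refine (fOp_eq_some_iff hT').2 ⟨i, j, hij, updF_apply_self .., ⟨fun k => ?_, fun k hk => ?_⟩,
    hv ▸ updF_updF_apply_self T i j a⟩
  · rw [upd, upd]
    split_ifs with hk hj
    · omega
    · linarith [hlast.le k]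
    · omega
    · linarith [hlast.lt k (by omega)]
  · have := hlast.le k
    rw [upd, upd, if_pos (by omega), if_neg (by omega)]
    omega

lemma eOp_eq_some_of_fOp_eq_some (hT : SsytOn κ.cells T) (h : fOp κ.cells a T = some T') :
    eOp κ.cells a T' = some T := by
  have hT' := hT.of_fOp_eq_some h
  obtain ⟨i, j, hij, hv, hfirst, rfl⟩ := (fOp_eq_some_iff hT).1 h
  obtain ⟨-, -, hrise⟩ := hT.col_of_hval_lt_succ (hfirst.lt _ j.lt_succ_self)
  have upd := hval_updF_of_eq hij hv
  refine (eOp_eq_some_iff hT').2 ⟨i, j, hij, updF_apply_self .., ⟨fun k => ?_, fun k hk => ?_⟩,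
    hv ▸ updF_updF_apply_self T i j (a + 1)⟩
  · rw [upd, upd, if_pos le_rfl]
    split_ifs with hk
    · linarith [hfirst.lt k (by omega)]
    · linarith [hfirst.le k]
  · have := hfirst.le k
    rw [upd, upd, if_pos le_rfl, if_neg (by omega)]
    omega

end Inverse

section Content

variable {D : Shape} {T T' : Filling} {a : ℕ}

lemma content_of_eOp_eq_some (hT : SsytOn D T) (h : eOp D a T = some T') :
    content D T' a = content D T a + 1 ∧ content D T (a + 1) = content D T' (a + 1) + 1 ∧
      ∀ b, b ≠ a → b ≠ a + 1 → content D T' b = content D T b := by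
  obtain ⟨i, j, hij, hv, -, rfl⟩ := (eOp_eq_some_iff hT).1 h
  have hc := content_updF_add hij T a
  refine ⟨by simpa [hv] using hc a, by simpa [hv] using (hc (a + 1)).symm, fun b hb hb' => ?_⟩
  simpa [hv, hb.symm, hb'.symm] using hc b

lemma content_of_fOp_eq_some (hT : SsytOn D T) (h : fOp D a T = some T') :
    content D T a = content D T' a + 1 ∧ content D T' (a + 1) = content D T (a + 1) + 1 ∧
      ∀ b, b ≠ a → b ≠ a + 1 → content D T' b = content D T b := by
  obtain ⟨i, j, hij, hv, -, rfl⟩ := (fOp_eq_some_iff hT).1 h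
  have hc := content_updF_add hij T (a + 1)
  refine ⟨by simpa [hv] using (hc a).symm, by simpa [hv] using hc (a + 1), fun b hb hb' => ?_⟩
  simpa [hv, hb.symm, hb'.symm] using hc b

end Content

lemma sSup_opIter_ne_none {op : Filling → Option Filling} {P : Filling → Prop}
    (m : Filling → ℕ) (hnone : ∀ T, P T → op T = none → m T = 0)
    (hsome : ∀ T T', P T → op T = some T' → P T' ∧ m T' + 1 = m T) {T : Filling} (hT : P T) :
    sSup {l | opIter op l T ≠ none} = m T := by
  have key : ∀ l T, P T → (opIter op l T ≠ none ↔ l ≤ m T) := by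
    intro l
    induction l with
    | zero => simp [opIter]
    | succ l ih =>
      intro T hT
      cases h : op T with
      | none => simp [opIter, h, hnone T hT h]
      | some T' =>
        obtain ⟨hT', hm⟩ := hsome T T' hT h
        simp only [opIter, h, Option.bind_some, ih T' hT']
        omega
  rw [show {l | opIter op l T ≠ none} = Set.Iic (m T) from Set.ext fun l => key l T hT,
    csSup_Iic]

section Signature

variable {D : Shape} {T T' : Filling} {a : ℕ}

lemma range_width_nonempty (D : Shape) : (range (width D)).Nonempty := nonempty_range_add_one

noncomputable def hvalMax (D : Shape) (T : Filling) (a : ℕ) : ℤ :=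
  (range (width D)).sup' (range_width_nonempty D) (hval D T a)

noncomputable def kvalMax (D : Shape) (T : Filling) (a : ℕ) : ℤ :=
  (range (width D)).sup' (range_width_nonempty D) (kval D T a)

lemma hval_le_hvalMax {k : ℕ} (hk : k < width D) : hval D T a k ≤ hvalMax D T a :=
  le_sup' (hval D T a) (mem_range.2 hk)

lemma kval_le_kvalMax {k : ℕ} (hk : k < width D) : kval D T a k ≤ kvalMax D T a :=
  le_sup' (kval D T a) (mem_range.2 hk)

lemma hval_le_max_hvalMax (k : ℕ) : hval D T a k ≤ max (hvalMax D T a) 0 := by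
  rcases lt_or_ge k (width D) with hk | hk
  · exact (hval_le_hvalMax hk).trans (le_max_left _ _)
  · exact (hval_of_width_le hk).trans_le (le_max_right _ _)

lemma eOp_eq_none_iff : eOp D a T = none ↔ hvalMax D T a ≤ 0 := by
  rw [eOp_eq_dite, hvalMax, ← not_lt, ← posMaxCols_nonempty_iff]
  split_ifs with h <;> simp [h]

lemma fOp_eq_none_iff : fOp D a T = none ↔ kvalMax D T a ≤ 0 := by
  rw [fOp_eq_dite, kvalMax, ← not_lt, ← posMaxCols_nonempty_iff]
  split_ifs with h <;> simp [h]

/-- Both maxima range over the values of `hval`, the second one shifted by `hval 0`. -/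
lemma toNat_hvalMax_eq (D : Shape) (T : Filling) (a : ℕ) :
    ((hvalMax D T a).toNat : ℤ) = hval D T a 0 + (kvalMax D T a).toNat := by
  have hw : 0 < width D := Nat.succ_pos _
  have hMh_le : hvalMax D T a ≤ hval D T a 0 + max (kvalMax D T a) 0 := sup'_le _ _ fun k hk => by
    rcases k with _ | k
    · exact le_add_of_nonneg_right (le_max_right _ _)
    · have := kval_le_kvalMax (D := D) (T := T) (a := a) (k := k) (by simp at hk; omega)
      rw [kval_eq] at this
      linarith [le_max_left (kvalMax D T a) 0]
  have hlast := kval_le_kvalMax (D := D) (T := T) (a := a) (by omega : width D - 1 < width D)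
  rw [kval_eq, Nat.sub_add_cancel hw, hval_of_width_le le_rfl] at hlast
  have h₀ := hval_le_hvalMax (D := D) (T := T) (a := a) hw
  obtain ⟨j, -, hj⟩ := exists_mem_eq_sup' (range_width_nonempty D) (kval D T a)
  have hj' := hval_le_max_hvalMax (D := D) (T := T) (a := a) (j + 1)
  rw [← kvalMax, kval_eq] at hj
  rw [Int.toNat_eq_max, Int.toNat_eq_max]
  omega

lemma toNat_hvalMax_of_eOp_eq_some (hT : SsytOn D T) (h : eOp D a T = some T') :
    (hvalMax D T' a).toNat + 1 = (hvalMax D T a).toNat := by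
  obtain ⟨i, j, hij, hv, hlast, rfl⟩ := (eOp_eq_some_iff hT).1 h
  obtain ⟨-, -, hdrop⟩ := hT.col_of_hval_succ_lt (hlast.lt _ j.lt_succ_self)
  have upd := hval_updF_of_eq_succ hij hv
  have hM : hvalMax D T a = hval D T a j :=
    le_antisymm (sup'_le _ _ fun k _ => hlast.le k) (hval_le_hvalMax (snd_lt_width hij))
  have hpos : 0 < hval D T a j := hval_of_width_le (le_refl (width D)) ▸ hlast.lt _ (snd_lt_width hij)
  have hM' : hvalMax D (updF T i j a) a ≤ hval D T a j - 1 := sup'_le _ _ fun k _ => by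
    rw [upd]
    split_ifs with hk
    · linarith [hlast.le k]
    · linarith [hlast.lt k (by omega)]
  have hnext := hval_le_max_hvalMax (D := D) (T := updF T i j a) (a := a) (j + 1)
  rw [upd, if_neg (by omega)] at hnext
  omega

lemma toNat_kvalMax_of_fOp_eq_some {κ : YoungDiagram} (hT : SsytOn κ.cells T)
    (h : fOp κ.cells a T = some T') :
    (kvalMax κ.cells T' a).toNat + 1 = (kvalMax κ.cells T a).toNat := by
  have hε := toNat_hvalMax_of_eOp_eq_some (hT.of_fOp_eq_some h) (eOp_eq_some_of_fOp_eq_some hT h)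
  obtain ⟨i, j, hij, hv, -, rfl⟩ := (fOp_eq_some_iff hT).1 h
  have h₀ := hval_updF_of_eq hij hv 0
  have := toNat_hvalMax_eq κ.cells T a
  have := toNat_hvalMax_eq κ.cells (updF T i j (a + 1)) a
  simp only [zero_le, if_true] at h₀
  omega

lemma epsNum_eq {κ : YoungDiagram} (hT : SsytOn κ.cells T) :
    epsNum κ.cells a T = (hvalMax κ.cells T a).toNat :=
  sSup_opIter_ne_none (P := SsytOn κ.cells) _
    (fun _ _ h => Int.toNat_eq_zero.2 (eOp_eq_none_iff.1 h))
    (fun _ _ hT h => ⟨hT.of_eOp_eq_some h, toNat_hvalMax_of_eOp_eq_some hT h⟩) hT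

lemma phiNum_eq {κ : YoungDiagram} (hT : SsytOn κ.cells T) :
    phiNum κ.cells a T = (kvalMax κ.cells T a).toNat :=
  sSup_opIter_ne_none (P := SsytOn κ.cells) _
    (fun _ _ h => Int.toNat_eq_zero.2 (fOp_eq_none_iff.1 h))
    (fun _ _ hT h => ⟨hT.of_fOp_eq_some h, toNat_kvalMax_of_fOp_eq_some hT h⟩) hT

lemma phiNum_sub_epsNum {κ : YoungDiagram} (hT : SsytOn κ.cells T) :
    (phiNum κ.cells a T : ℤ) - epsNum κ.cells a T =
      (content κ.cells T a : ℤ) - content κ.cells T (a + 1) := by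
  rw [phiNum_eq hT, epsNum_eq hT, toNat_hvalMax_eq, hval_zero]
  ring

end Signature

section Highest

variable {κ : YoungDiagram} {T : Filling}

def highestTableau (κ : YoungDiagram) : Filling := fun i j => if (i, j) ∈ κ.cells then i else 0

lemma highestTableau_ssyt (κ : YoungDiagram) : SsytOn κ.cells (highestTableau κ) := by
  refine ⟨fun i j₁ j₂ _ h₁ h₂ => ?_, fun i₁ i₂ j hlt h₁ h₂ => ?_, fun i j h => ?_⟩ <;>
    simp_all [highestTableau]

lemma highestTableau_entriesLT {s : ℕ} (hrows : κ.colLen 0 ≤ s) :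
    EntriesLT κ.cells s (highestTableau κ) := fun c hc => by
  have := YoungDiagram.mem_iff_lt_colLen.1 (κ.up_left_mem le_rfl (Nat.zero_le c.2) hc)
  simp only [highestTableau, if_pos hc]
  omega

lemma hval_highestTableau_nonpos (a j : ℕ) : hval κ.cells (highestTableau κ) a j ≤ 0 := by
  have hrow : ∀ c ∈ κ.cells, highestTableau κ c.1 c.2 = c.1 := fun c hc => if_pos hc
  have : (κ.cells.filter (fun c => j ≤ c.2 ∧ highestTableau κ c.1 c.2 = a + 1)).card ≤
      (κ.cells.filter (fun c => j ≤ c.2 ∧ highestTableau κ c.1 c.2 = a)).card := by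
    refine card_le_card_of_injOn (fun c => (a, c.2)) (fun c hc => ?_) (fun c hc c' hc' he => ?_)
    · simp only [mem_coe, mem_filter] at hc ⊢
      rw [hrow c hc.1] at hc
      have hmem : (a, c.2) ∈ κ.cells := κ.up_left_mem (by omega) le_rfl hc.1
      exact ⟨hmem, hc.2.1, hrow _ hmem⟩
    · simp only [mem_coe, mem_filter] at hc hc'
      rw [hrow c hc.1] at hc
      rw [hrow c' hc'.1] at hc'
      exact Prod.ext (by omega) (by simpa using he)
  simp only [hval]
  omega

lemma eOp_highestTableau (a : ℕ) : eOp κ.cells a (highestTableau κ) = none :=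
  eOp_eq_none_iff.2 (sup'_le _ _ fun j _ => hval_highestTableau_nonpos a j)

/-- If an entry of row `i` exceeds `i`, with rows above already minimal, then it is an `a + 1`
with no `a` weakly to its right, so `e_a` applies. -/
lemma eq_highestTableau_of_eOp_eq_none {s : ℕ} (hT : SsytOn κ.cells T)
    (hE : EntriesLT κ.cells s T) (hnone : ∀ a, a + 1 < s → eOp κ.cells a T = none) :
    T = highestTableau κ := by
  suffices hrow : ∀ i j, (i, j) ∈ κ.cells → T i j = i by
    funext i j
    by_cases hij : (i, j) ∈ κ.cells
    · rw [hrow i j hij, highestTableau, if_pos hij]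
    · rw [hT.2.2 i j hij, highestTableau, if_neg hij]
  intro i
  induction i using Nat.strong_induction_on with
  | _ i ih =>
  intro j hij
  have hge : i ≤ T i j := by
    rcases i with _ | i
    · exact Nat.zero_le _
    · have hD : (i, j) ∈ κ.cells := κ.up_left_mem i.le_succ le_rfl hij
      have := hT.2.1 i (i + 1) j i.lt_succ_self hD hij
      rw [ih i i.lt_succ_self j hD] at this
      omega
  by_contra hne
  obtain ⟨a, ha⟩ : ∃ a, T i j = a + 1 := ⟨T i j - 1, by omega⟩
  have hs : a + 1 < s := ha ▸ hE _ hij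
  have hpos : 0 < hval κ.cells T a j := by
    have h₁ : 1 ≤ (κ.cells.filter (fun c => j ≤ c.2 ∧ T c.1 c.2 = a + 1)).card :=
      card_pos.2 ⟨(i, j), mem_filter.2 ⟨hij, le_rfl, ha⟩⟩
    have h₀ : (κ.cells.filter (fun c => j ≤ c.2 ∧ T c.1 c.2 = a)).card = 0 := by
      refine card_eq_zero.2 (filter_eq_empty_iff.2 fun c hc ⟨hjc, hv⟩ => ?_)
      rcases lt_or_ge c.1 i with hlt | hle
      · have := ih c.1 hlt c.2 hc
        omega
      · have hD : (i, c.2) ∈ κ.cells := κ.up_left_mem hle le_rfl hc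
        have := hT.1 i j c.2 hjc hij hD
        have := hT.col_le hle hD hc
        omega
    simp only [hval]
    omega
  have := hval_le_hvalMax (D := κ.cells) (T := T) (a := a) (k := j) (snd_lt_width hij)
  have := eOp_eq_none_iff.1 (hnone a hs)
  omega

end Highest

lemma reflTransGen_of_measure {α : Type*} {r : α → α → Prop} {P : α → Prop} (m : α → ℕ)
    {x₀ : α} (hstep : ∀ x y, P x → r x y → P y ∧ m y < m x)
    (hterm : ∀ x, P x → (∀ y, ¬r x y) → x = x₀) (x : α) (hx : P x) :
    Relation.ReflTransGen r x x₀ := by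
  induction x using (measure m).wf.induction with
  | _ x ih =>
  by_cases h : ∃ y, r x y
  · obtain ⟨y, hy⟩ := h
    obtain ⟨hPy, hlt⟩ := hstep x y hx hy
    exact .head hy (ih y hlt hPy)
  · push Not at h
    rw [hterm x hx h]

lemma sum_entries_of_eOp_eq_some {D : Shape} {T T' : Filling} {a : ℕ} (hT : SsytOn D T)
    (h : eOp D a T = some T') : ∑ c ∈ D, T' c.1 c.2 < ∑ c ∈ D, T c.1 c.2 := by
  obtain ⟨i, j, hij, hv, -, rfl⟩ := (eOp_eq_some_iff hT).1 h
  have := sum_updF_add hij T a (fun _ x => x)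
  simp only [hv] at this
  omega

lemma reflTransGen_eOp_highestTableau {s : ℕ} {κ : YoungDiagram} (T : Filling)
    (hT : SsytOn κ.cells T) (hE : EntriesLT κ.cells s T) :
    Relation.ReflTransGen (fun x y => ∃ a, a + 1 < s ∧ eOp κ.cells a x = some y) T
      (highestTableau κ) := by
  refine reflTransGen_of_measure (P := fun T => SsytOn κ.cells T ∧ EntriesLT κ.cells s T)
    (fun T => ∑ c ∈ κ.cells, T c.1 c.2) ?_ ?_ T ⟨hT, hE⟩
  · rintro x y ⟨hx, hxE⟩ ⟨a, -, h⟩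
    exact ⟨⟨hx.of_eOp_eq_some h, hxE.of_eOp_eq_some hx h⟩, sum_entries_of_eOp_eq_some hx h⟩
  · rintro x ⟨hx, hxE⟩ hterm
    refine eq_highestTableau_of_eOp_eq_none hx hxE fun a ha => ?_
    cases h : eOp κ.cells a x with
    | none => rfl
    | some y => exact absurd ⟨a, ha, h⟩ (hterm y)

/-- For a partition `κ` with (at most) `s` parts, the set of
semistandard tableaux of shape `κ` with entries in `{0, …, s-1}`, with the
Kashiwara–Nakashima operators `e_a, f_a` (`a + 1 < s`) and weight given by the
content, is a connected crystal with a unique highest weight element, namely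
the tableau of shape and content `κ` (row `i` filled with `i`). -/
theorem tableau_crystal (s : ℕ) (κ : YoungDiagram) (hrows : κ.colLen 0 ≤ s) :
    -- the operators preserve the tableau set
    (∀ a T T', a + 1 < s → SsytOn κ.cells T → EntriesLT κ.cells s T →
        (eOp κ.cells a T = some T' ∨ fOp κ.cells a T = some T') →
        SsytOn κ.cells T' ∧ EntriesLT κ.cells s T') ∧
    -- crystal axiom (i): φ_a - ε_a = ⟨wt, α_a^∨⟩
    (∀ a T, a + 1 < s → SsytOn κ.cells T → EntriesLT κ.cells s T →
        (phiNum κ.cells a T : ℤ) - (epsNum κ.cells a T : ℤ) =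
          (content κ.cells T a : ℤ) - (content κ.cells T (a + 1) : ℤ)) ∧
    -- crystal axiom (ii): e_a adds the simple root α_a to the weight
    (∀ a T T', a + 1 < s → SsytOn κ.cells T → EntriesLT κ.cells s T →
        eOp κ.cells a T = some T' →
        content κ.cells T' a = content κ.cells T a + 1 ∧
        content κ.cells T (a + 1) = content κ.cells T' (a + 1) + 1 ∧
        ∀ b, b ≠ a → b ≠ a + 1 → content κ.cells T' b = content κ.cells T b) ∧
    -- crystal axiom (ii): f_a subtracts the simple root α_a from the weight
    (∀ a T T', a + 1 < s → SsytOn κ.cells T → EntriesLT κ.cells s T →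
        fOp κ.cells a T = some T' →
        content κ.cells T a = content κ.cells T' a + 1 ∧
        content κ.cells T' (a + 1) = content κ.cells T (a + 1) + 1 ∧
        ∀ b, b ≠ a → b ≠ a + 1 → content κ.cells T' b = content κ.cells T b) ∧
    -- crystal axiom (iii): T' = e_a · T iff T = f_a · T'
    (∀ a T T', a + 1 < s → SsytOn κ.cells T → EntriesLT κ.cells s T →
        SsytOn κ.cells T' → EntriesLT κ.cells s T' →
        (eOp κ.cells a T = some T' ↔ fOp κ.cells a T' = some T)) ∧
    -- the tableau of shape and content κ is the unique highest weight element
    (SsytOn κ.cells (fun i j => if (i, j) ∈ κ.cells then i else 0) ∧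
      EntriesLT κ.cells s (fun i j => if (i, j) ∈ κ.cells then i else 0) ∧
      (∀ a, a + 1 < s →
        eOp κ.cells a (fun i j => if (i, j) ∈ κ.cells then i else 0) = none) ∧
      (∀ T, SsytOn κ.cells T → EntriesLT κ.cells s T →
        (∀ a, a + 1 < s → eOp κ.cells a T = none) →
        T = fun i j => if (i, j) ∈ κ.cells then i else 0)) ∧
    -- connectedness: every tableau is raised to the highest weight element
    (∀ T, SsytOn κ.cells T → EntriesLT κ.cells s T →
      Relation.ReflTransGen (fun x y => ∃ a, a + 1 < s ∧ eOp κ.cells a x = some y) T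
        (fun i j => if (i, j) ∈ κ.cells then i else 0)) := by
  refine ⟨?_, fun a T _ hT _ => phiNum_sub_epsNum hT,
    fun a T T' _ hT _ h => content_of_eOp_eq_some hT h,
    fun a T T' _ hT _ h => content_of_fOp_eq_some hT h,
    fun a T T' _ hT _ hT' _ => ⟨fOp_eq_some_of_eOp_eq_some hT, eOp_eq_some_of_fOp_eq_some hT'⟩,
    ⟨highestTableau_ssyt κ, highestTableau_entriesLT hrows, fun a _ => eOp_highestTableau a,
      fun _ hT hE => eq_highestTableau_of_eOp_eq_none hT hE⟩,
    reflTransGen_eOp_highestTableau⟩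
  rintro a T T' ha hT hE (h | h)
  · exact ⟨hT.of_eOp_eq_some h, hE.of_eOp_eq_some hT h⟩
  · exact ⟨hT.of_fOp_eq_some h, hE.of_fOp_eq_some hT ha h⟩

end PaperFormal
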